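/- (Nonadaptive simulation.) Let T be a natural number, μ₀ > 0 a real number, and m ∈ ℝ^T a vector with ‖m‖₂ ≤ μ₀. Then there exists a single Markov kernel κ from ℝ to ℝ^T such that for every b ∈ ℝ, the multivariate Gaussian distribution N(b·m, I) on ℝ^T equals the composition of the one-dimensional Gaussian N(b·μ₀, 1) with κ (i.e., N(b·m, I) = ∫ κ(w) dN(b·μ₀,1)(w)). In particular the family of distributions {N(b·m, I)}_{b∈ℝ} is a postprocessing of the family {N(b·μ₀, 1)}_{b∈ℝ} by a map not depending on b. -/

import Mathlib

open Matrix MeasureTheory ProbabilityTheory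

/-- The multivariate Gaussian distribution on `ℝ^T` with mean vector `μ` and positive
semidefinite covariance matrix `S`: the law of `μ + √S · Z` where `Z` is a vector of `T`
i.i.d. standard Gaussians (equivalently, the unique measure on `ℝ^T` with characteristic
function `t ↦ exp(i⟨t,μ⟩ - ⟨t, S t⟩/2)`). -/
noncomputable def multivariateGaussian {T : ℕ} (μ : Fin T → ℝ)
    (S : Matrix (Fin T) (Fin T) ℝ) (hS : S.PosSemidef) : Measure (Fin T → ℝ) :=
  (Measure.pi fun _ : Fin T => gaussianReal 0 1).map fun z => μ +
    ((hS.1.eigenvectorUnitary : Matrix (Fin T) (Fin T) ℝ) *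
      diagonal ((RCLike.ofReal : ℝ → ℝ) ∘ Real.sqrt ∘ hS.1.eigenvalues) *
      (star hS.1.eigenvectorUnitary : Matrix (Fin T) (Fin T) ℝ)) *ᵥ z

/-- The Euclidean norm `‖v‖₂ = √(∑ i, v i ^ 2)` of a vector `v ∈ ℝ^T`. -/
noncomputable def euclideanNorm {T : ℕ} (v : Fin T → ℝ) : ℝ :=
  Real.sqrt (∑ i, v i ^ 2)

/-!
Let `u := (√(μ₀² - ‖m‖²), m) ∈ ℝ^(T+1)`, a vector of norm `μ₀`, and let `R` be the reflection
exchanging `μ₀ e₀` and `u`. If `W ~ N(b μ₀, 1)` and `Z ~ N(0, I_T)` are independent, then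
`(W, Z) ~ N(b μ₀ e₀, I)`, so by rotation invariance of the standard Gaussian `R (W, Z) ~ N(b u, I)`,
whose last `T` coordinates have law `N(b m, I)`. The kernel `w ↦ law of the tail of R (w, Z)` does
not involve `b`.
-/

open WithLp

section GaussianPi

variable {ι : Type*} [Fintype ι]

lemma pi_gaussianReal_eq_map_add (a : ι → ℝ) :
    Measure.pi (fun i => gaussianReal (a i) 1) =
      (Measure.pi fun _ : ι => gaussianReal 0 1).map (a + ·) := by
  refine (measurePreserving_pi _ _ fun i => ⟨measurable_const_add (a i), ?_⟩).map_eq.symm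
  rw [gaussianReal_map_const_add, zero_add]

lemma measurePreserving_toLp_pi_gaussianReal :
    MeasurePreserving (toLp 2) (Measure.pi fun _ : ι => gaussianReal 0 1)
      (stdGaussian (EuclideanSpace ℝ ι)) :=
  ⟨by fun_prop, map_pi_eq_stdGaussian⟩

lemma map_pi_gaussianReal_linearIsometryEquiv
    (R : EuclideanSpace ℝ ι ≃ₗᵢ[ℝ] EuclideanSpace ℝ ι) (a : ι → ℝ) :
    (Measure.pi fun i => gaussianReal (a i) 1).map (fun x => ofLp (R (toLp 2 x))) =
      Measure.pi fun i => gaussianReal (R (toLp 2 a) i) 1 := by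
  have hofLp : MeasurePreserving ofLp (stdGaussian (EuclideanSpace ℝ ι))
      (Measure.pi fun _ : ι => gaussianReal 0 1) :=
    measurePreserving_toLp_pi_gaussianReal.symm (MeasurableEquiv.toLp 2 (ι → ℝ))
  have hR : MeasurePreserving R (stdGaussian _) (stdGaussian _) :=
    ⟨R.continuous.measurable, stdGaussian_map R⟩
  have hstd := (hofLp.comp (hR.comp measurePreserving_toLp_pi_gaussianReal)).map_eq
  calc _ = ((Measure.pi fun _ : ι => gaussianReal 0 1).map (a + ·)).map
          (ofLp ∘ R ∘ toLp 2) := by rw [pi_gaussianReal_eq_map_add]; rfl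
    _ = ((Measure.pi fun _ : ι => gaussianReal 0 1).map (ofLp ∘ R ∘ toLp 2)).map
          (ofLp (R (toLp 2 a)) + ·) := by
        rw [Measure.map_map (by fun_prop) (by fun_prop),
          Measure.map_map (by fun_prop) (by fun_prop)]
        congr 1
        ext x i
        simp
    _ = _ := by rw [hstd, ← pi_gaussianReal_eq_map_add]

end GaussianPi

section FinCons

variable {α : Type*} [MeasurableSpace α] {n : ℕ} (μ : Fin (n + 1) → Measure α)

lemma map_cons_prod_pi [∀ i, SigmaFinite (μ i)] :
    ((μ 0).prod (Measure.pi fun i => μ i.succ)).map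
      (fun p : α × (Fin n → α) => (Fin.cons p.1 p.2 : Fin (n + 1) → α)) = Measure.pi μ := by
  have h := (measurePreserving_piFinSuccAbove μ 0).symm.map_eq
  simp only [Fin.succAbove_zero] at h
  convert h using 2
  ext p : 1
  simp [MeasurableEquiv.piFinSuccAbove, Fin.insertNthEquiv, Fin.insertNth_zero']

lemma map_tail_pi [∀ i, IsProbabilityMeasure (μ i)] :
    (Measure.pi μ).map Fin.tail = Measure.pi fun i => μ i.succ := by
  have h := (measurePreserving_piFinSuccAbove μ 0).map_eq
  simp only [Fin.succAbove_zero] at h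
  calc (Measure.pi μ).map Fin.tail
      = ((Measure.pi μ).map (MeasurableEquiv.piFinSuccAbove (fun _ => α) 0)).map Prod.snd := by
        rw [Measure.map_map measurable_snd (MeasurableEquiv.measurable _)]
        rfl
    _ = _ := by rw [h, Measure.map_snd_prod, measure_univ, one_smul]

end FinCons

lemma comp_map_id_prod_const {α β γ : Type*} [MeasurableSpace α] [MeasurableSpace β]
    [MeasurableSpace γ] (μ : Measure α) [SFinite μ] (ν : Measure β) [SFinite ν]
    {f : α × β → γ} (hf : Measurable f) :
    (Kernel.id ×ₖ Kernel.const α ν).map f ∘ₘ μ = (μ.prod ν).map f := by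
  rw [← Measure.map_comp _ _ hf, ← Measure.compProd_eq_comp_prod, Measure.compProd_const]

lemma multivariateGaussian_eq_map_cfc_sqrt {T : ℕ} (μ : Fin T → ℝ)
    {S : Matrix (Fin T) (Fin T) ℝ} (hS : S.PosSemidef) :
    multivariateGaussian μ S hS =
      (Measure.pi fun _ : Fin T => gaussianReal 0 1).map fun z => μ + cfc Real.sqrt S *ᵥ z := by
  rw [_root_.multivariateGaussian, hS.1.cfc_eq, IsHermitian.cfc, Unitary.conjStarAlgAut_apply]

lemma multivariateGaussian_one {T : ℕ} (μ : Fin T → ℝ) :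
    multivariateGaussian μ 1 PosSemidef.one = Measure.pi fun i => gaussianReal (μ i) 1 := by
  rw [multivariateGaussian_eq_map_cfc_sqrt, cfc_apply_one, Real.sqrt_one, map_one,
    pi_gaussianReal_eq_map_add μ]
  simp only [one_mulVec]

lemma EuclideanSpace.norm_sq_toLp_cons {n : ℕ} (x : ℝ) (y : Fin n → ℝ) :
    ‖toLp 2 (Fin.cons x y : Fin (n + 1) → ℝ)‖ ^ 2 = x ^ 2 + ‖toLp 2 y‖ ^ 2 := by
  simp [EuclideanSpace.norm_sq_eq, Fin.sum_univ_succ]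

lemma euclideanNorm_eq_norm_toLp {n : ℕ} (v : Fin n → ℝ) : euclideanNorm v = ‖toLp 2 v‖ := by
  simp [euclideanNorm, EuclideanSpace.norm_eq]

lemma map_prod_pi_gaussianReal_tail_linearIsometryEquiv {n : ℕ}
    (R : EuclideanSpace ℝ (Fin (n + 1)) ≃ₗᵢ[ℝ] EuclideanSpace ℝ (Fin (n + 1))) (c : ℝ) :
    ((gaussianReal c 1).prod (Measure.pi fun _ : Fin n => gaussianReal 0 1)).map
        (fun p => Fin.tail (ofLp (R (toLp 2 (Fin.cons p.1 p.2))))) =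
      Measure.pi fun i => gaussianReal (R (toLp 2 (Fin.cons c 0)) i.succ) 1 := by
  have hcons := map_cons_prod_pi fun i => gaussianReal ((Fin.cons c 0 : Fin (n + 1) → ℝ) i) 1
  simp only [Fin.cons_zero, Fin.cons_succ, Pi.zero_apply] at hcons
  rw [← Function.comp_def Fin.tail, ← Measure.map_map (by fun_prop) (by fun_prop),
    ← Function.comp_def (fun x => ofLp (R (toLp 2 x))),
    ← Measure.map_map (by fun_prop) (by fun_prop), hcons,
    map_pi_gaussianReal_linearIsometryEquiv, map_tail_pi]

theorem exists_isMarkovKernel_comp_gaussianReal_eq_pi {n : ℕ} {μ₀ : ℝ} (m : Fin n → ℝ)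
    (hm : ‖toLp 2 m‖ ≤ μ₀) :
    ∃ κ : Kernel ℝ (Fin n → ℝ), IsMarkovKernel κ ∧ ∀ b : ℝ,
      κ ∘ₘ gaussianReal (b * μ₀) 1 = Measure.pi fun i => gaussianReal (b * m i) 1 := by
  set v : EuclideanSpace ℝ (Fin (n + 1)) := toLp 2 (Fin.cons μ₀ 0)
  set w : EuclideanSpace ℝ (Fin (n + 1)) := toLp 2 (Fin.cons √(μ₀ ^ 2 - ‖toLp 2 m‖ ^ 2) m)
  have hvw : ‖v‖ = ‖w‖ := by
    have hm_sq : ‖toLp 2 m‖ ^ 2 ≤ μ₀ ^ 2 := pow_le_pow_left₀ (norm_nonneg _) hm 2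
    refine (sq_eq_sq₀ (norm_nonneg _) (norm_nonneg _)).1 ?_
    rw [EuclideanSpace.norm_sq_toLp_cons, EuclideanSpace.norm_sq_toLp_cons,
      Real.sq_sqrt (sub_nonneg.2 hm_sq)]
    simp
  set R := Submodule.reflection (ℝ ∙ (v - w))ᗮ
  have hRb (b : ℝ) : R (toLp 2 (Fin.cons (b * μ₀) 0)) = b • w := by
    rw [← Submodule.reflection_sub hvw, ← map_smul]
    congr 1
    ext i
    cases i using Fin.cases <;> simp [v]
  let F : ℝ × (Fin n → ℝ) → Fin n → ℝ := fun p =>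
    Fin.tail (ofLp (R (toLp 2 (Fin.cons p.1 p.2))))
  have hF : Measurable F := by fun_prop
  refine ⟨(Kernel.id ×ₖ Kernel.const ℝ (Measure.pi fun _ => gaussianReal 0 1)).map F,
    Kernel.IsMarkovKernel.map _ hF, fun b => ?_⟩
  rw [comp_map_id_prod_const _ _ hF, map_prod_pi_gaussianReal_tail_linearIsometryEquiv, hRb]
  simp [w]

theorem nonadaptive_gaussian_simulation_general (T : ℕ) (μ₀ : ℝ)
    (m : Fin T → ℝ) (hm : euclideanNorm m ≤ μ₀) :
    ∃ κ : Kernel ℝ (Fin T → ℝ), IsMarkovKernel κ ∧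
      ∀ b : ℝ, multivariateGaussian (b • m) 1 Matrix.PosSemidef.one =
        (gaussianReal (b * μ₀) 1).bind fun w => κ w := by
  rw [euclideanNorm_eq_norm_toLp] at hm
  obtain ⟨κ, hκ, hcomp⟩ := exists_isMarkovKernel_comp_gaussianReal_eq_pi m hm
  exact ⟨κ, hκ, fun b => by rw [multivariateGaussian_one]; exact (hcomp b).symm⟩

/-- Nonadaptive simulation: if `‖m‖₂ ≤ μ₀`, there is a single Markov kernel `κ : ℝ → ℝ^T`,
not depending on `b`, such that for every `b ∈ ℝ` the multivariate Gaussian `N(b • m, I)` is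
the composition of the one-dimensional Gaussian `N(b μ₀, 1)` with `κ`. Hence the family
`{N(b • m, I)}_b` is a postprocessing of the family `{N(b μ₀, 1)}_b`. -/
theorem nonadaptive_gaussian_simulation (T : ℕ) (μ₀ : ℝ) (hμ₀ : 0 < μ₀)
    (m : Fin T → ℝ) (hm : euclideanNorm m ≤ μ₀) :
    ∃ κ : Kernel ℝ (Fin T → ℝ), IsMarkovKernel κ ∧
      ∀ b : ℝ, multivariateGaussian (b • m) 1 Matrix.PosSemidef.one =
        (gaussianReal (b * μ₀) 1).bind fun w => κ w :=
  nonadaptive_gaussian_simulation_general T μ₀ m hm
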